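/- arXiv:1810.12854 — 6 statements merged into one kernel-verified Lean document; each statement's English description precedes it below -/
import Mathlib

section
/- Let (X,d) be a compact metric space and f : X → X a homeomorphism. The cascade (X,f) is uniformly rigid if and only if the induced cascade (2^X, f_*) on the hyperspace is uniformly rigid, if and only if (2^X, f_*) is rigid. -/
open TopologicalSpace Filter Metric

/-- The induced map `f_* : 2^X → 2^X`, `f_*(A) = f(A)`. -/
def inducedHyperMap {X : Type*} [MetricSpace X] (f : X → X) (hf : Continuous f) :
    NonemptyCompacts X → NonemptyCompacts X :=
  fun A => ⟨⟨f '' (A : Set X), A.isCompact.image hf⟩, A.nonempty.image f⟩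

/-- `(Y,g)` is rigid: there is a sequence `n_k → ∞` with `g^{n_k}(y) → y` for all `y`. -/
def RigidMap {Y : Type*} [MetricSpace Y] (g : Y → Y) : Prop :=
  ∃ n : ℕ → ℕ, Tendsto n atTop atTop ∧
    ∀ y : Y, Tendsto (fun k => g^[n k] y) atTop (nhds y)

/-- `(Y,g)` is uniformly rigid: there is a sequence `n_k → ∞` such that `g^{n_k}` converges
to the identity uniformly on `Y`. -/
def UniformlyRigidMap {Y : Type*} [MetricSpace Y] (g : Y → Y) : Prop :=
  ∃ n : ℕ → ℕ, Tendsto n atTop atTop ∧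
    TendstoUniformly (fun k y => g^[n k] y) id atTop

lemma inducedHyperMap_iterate_coe {X : Type*} [MetricSpace X] (f : X → X) (hf : Continuous f)
    (n : ℕ) (A : NonemptyCompacts X) :
    (((inducedHyperMap f hf)^[n] A : NonemptyCompacts X) : Set X) = f^[n] '' (A : Set X) := by
  induction n with
  | zero => simp
  | succ n ih =>
    rw [Function.iterate_succ_apply']
    show f '' (((inducedHyperMap f hf)^[n] A : NonemptyCompacts X) : Set X) = _
    rw [ih, Function.iterate_succ', Set.image_comp]

lemma hEdist_ne_top {X : Type*} [MetricSpace X] [CompactSpace X]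
    (A B : NonemptyCompacts X) : EMetric.hausdorffEdist (A : Set X) (B : Set X) ≠ ⊤ :=
  hausdorffEdist_ne_top_of_nonempty_of_bounded A.nonempty B.nonempty
    A.isCompact.isBounded B.isCompact.isBounded

/-- Uniform rigidity of `f` implies uniform rigidity of the induced hyperspace map. -/
lemma ur_induced {X : Type*} [MetricSpace X] [CompactSpace X] (f : X ≃ₜ X)
    (h : UniformlyRigidMap (⇑f)) :
    UniformlyRigidMap (inducedHyperMap (⇑f) f.continuous) := by
  obtain ⟨n, hn, hu⟩ := h
  refine ⟨n, hn, ?_⟩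
  rw [Metric.tendstoUniformly_iff] at hu ⊢
  intro ε hε
  filter_upwards [hu (ε / 2) (by linarith)] with k hk A
  have hle : hausdorffDist (A : Set X) ((inducedHyperMap (⇑f) f.continuous)^[n k] A : Set X)
      ≤ ε / 2 := by
    rw [inducedHyperMap_iterate_coe]
    apply hausdorffDist_le_of_mem_dist (by linarith)
    · intro y hy
      exact ⟨(⇑f)^[n k] y, Set.mem_image_of_mem _ hy, (hk y).le⟩
    · rintro x ⟨y, hy, rfl⟩
      exact ⟨y, hy, by rw [dist_comm]; exact (hk y).le⟩
  calc dist (id A) ((inducedHyperMap (⇑f) f.continuous)^[n k] A)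
      = hausdorffDist (A : Set X) ((inducedHyperMap (⇑f) f.continuous)^[n k] A : Set X) := rfl
    _ ≤ ε / 2 := hle
    _ < ε := by linarith

/-- Uniform rigidity of the induced hyperspace map implies uniform rigidity of `f`. -/
lemma ur_from_induced {X : Type*} [MetricSpace X] [CompactSpace X] (f : X ≃ₜ X)
    (h : UniformlyRigidMap (inducedHyperMap (⇑f) f.continuous)) :
    UniformlyRigidMap (⇑f) := by
  obtain ⟨n, hn, hu⟩ := h
  refine ⟨n, hn, ?_⟩
  rw [Metric.tendstoUniformly_iff] at hu ⊢
  intro ε hε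
  filter_upwards [hu ε hε] with k hk x
  have := hk ⟨⟨{x}, isCompact_singleton⟩, Set.singleton_nonempty x⟩
  rw [NonemptyCompacts.dist_eq] at this
  have hcoe : (((inducedHyperMap (⇑f) f.continuous)^[n k]
      ⟨⟨{x}, isCompact_singleton⟩, Set.singleton_nonempty x⟩ : NonemptyCompacts X) : Set X)
      = {(⇑f)^[n k] x} := by
    rw [inducedHyperMap_iterate_coe]
    exact Set.image_singleton
  rw [hcoe] at this
  have hsing : dist x ((⇑f)^[n k] x) ≤ hausdorffDist ({x} : Set X) {(⇑f)^[n k] x} := by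
    have := infDist_le_hausdorffDist_of_mem (t := {(⇑f)^[n k] x}) (Set.mem_singleton x)
      (hausdorffEdist_ne_top_of_nonempty_of_bounded (Set.singleton_nonempty _)
        (Set.singleton_nonempty _) Bornology.isBounded_singleton Bornology.isBounded_singleton)
    rwa [infDist_singleton] at this
  exact lt_of_le_of_lt hsing this

/-- Rigidity of the induced hyperspace map implies uniform rigidity of `f`. -/
lemma ur_of_rigid_induced {X : Type*} [MetricSpace X] [CompactSpace X] (f : X ≃ₜ X)
    (h : RigidMap (inducedHyperMap (⇑f) f.continuous)) :
    UniformlyRigidMap (⇑f) := by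
  obtain ⟨n, hn, hr⟩ := h
  refine ⟨n, hn, ?_⟩
  rw [Metric.tendstoUniformly_iff]
  intro ε hε
  -- cover X by finitely many balls of radius ε/8
  obtain ⟨s, hs⟩ := (isCompact_univ (X := X)).elim_finite_subcover
    (fun p : X => ball p (ε / 8)) (fun p => isOpen_ball)
    (fun x _ => Set.mem_iUnion.2 ⟨x, mem_ball_self (by linarith)⟩)
  -- for each center p, the closed ball is a nonempty compact
  set B : X → NonemptyCompacts X := fun p =>
    ⟨⟨closedBall p (ε / 8), isCompact_closedBall p _⟩,
      ⟨p, mem_closedBall_self (by linarith)⟩⟩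
  have hev : ∀ᶠ k in atTop, ∀ p ∈ s,
      dist ((inducedHyperMap (⇑f) f.continuous)^[n k] (B p)) (B p) < ε / 8 := by
    rw [eventually_all_finset]
    intro p _
    have := hr (B p)
    rw [Metric.tendsto_nhds] at this
    exact this (ε / 8) (by linarith)
  filter_upwards [hev] with k hk x
  obtain ⟨p, hp, hxp⟩ : ∃ p ∈ s, x ∈ ball p (ε / 8) := by
    have := hs (Set.mem_univ x)
    simpa using this
  have hd := hk p hp
  rw [NonemptyCompacts.dist_eq, inducedHyperMap_iterate_coe] at hd
  have hmem : (⇑f)^[n k] x ∈ (⇑f)^[n k] '' (B p : Set X) :=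
    Set.mem_image_of_mem _ (ball_subset_closedBall hxp)
  have hfin : EMetric.hausdorffEdist ((⇑f)^[n k] '' (B p : Set X)) ((B p : Set X)) ≠ ⊤ :=
    hausdorffEdist_ne_top_of_nonempty_of_bounded (((B p).nonempty).image _)
      (B p).nonempty (((B p).isCompact.image (f.continuous.iterate _)).isBounded)
      (B p).isCompact.isBounded
  have hinf : infDist ((⇑f)^[n k] x) (B p : Set X) < ε / 8 :=
    lt_of_le_of_lt (infDist_le_hausdorffDist_of_mem hmem hfin) hd
  obtain ⟨y, hy, hdy⟩ := (infDist_lt_iff (B p).nonempty).1 hinf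
  have hyp : dist y p ≤ ε / 8 := mem_closedBall.1 hy
  have hxp' : dist x p < ε / 8 := mem_ball.1 hxp
  have hpy : dist p y ≤ ε / 8 := by rw [dist_comm]; exact hyp
  have hyf : dist y ((⇑f)^[n k] x) < ε / 8 := by rw [dist_comm]; exact hdy
  calc dist (id x) ((⇑f)^[n k] x)
      ≤ dist x p + dist p y + dist y ((⇑f)^[n k] x) := dist_triangle4 _ _ _ _
    _ < ε := by linarith

/-- For a homeomorphism `f` of a compact metric space `X`: `(X,f)` is uniformly rigid iff
`(2^X,f_*)` is uniformly rigid iff `(2^X,f_*)` is rigid. -/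
theorem uniformlyRigid_iff_induced
    {X : Type*} [MetricSpace X] [CompactSpace X] (f : X ≃ₜ X) :
    (UniformlyRigidMap (⇑f) ↔ UniformlyRigidMap (inducedHyperMap (⇑f) f.continuous)) ∧
    (UniformlyRigidMap (inducedHyperMap (⇑f) f.continuous) ↔
      RigidMap (inducedHyperMap (⇑f) f.continuous)) := by
  refine ⟨⟨ur_induced f, ur_from_induced f⟩, ⟨?_, fun h => ur_induced f (ur_of_rigid_induced f h)⟩⟩
  rintro ⟨n, hn, hu⟩
  exact ⟨n, hn, fun A => hu.tendsto_at A⟩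
end

section
/- Let (X,f) be a cascade and suppose p ∈ E(X) is a periodic point of the system (E(X), f), i.e., f^n ∘ p = p for some n ≥ 1. Then the (finite) orbit O(p) = {p, f∘p, ..., f^{n-1}∘p} is a minimal left ideal of the semigroup E(X). -/
/-- The enveloping semigroup of a cascade `(X,f)`: the closure of `{f^k : k ∈ ℤ}`
in `X^X` with the product topology. -/
def envCascade {X : Type*} [TopologicalSpace X] (f : X ≃ₜ X) : Set (X → X) :=
  closure (Set.range fun n : ℤ => ⇑(f.toEquiv ^ n))

/-- `I` is a minimal left ideal of `E(X)` (semigroup under composition). -/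
def IsMinLeftIdealCascade {X : Type*} [TopologicalSpace X] (f : X ≃ₜ X)
    (I : Set (X → X)) : Prop :=
  I.Nonempty ∧ IsClosed I ∧ I ⊆ envCascade f ∧
    (∀ p ∈ envCascade f, ∀ q ∈ I, p ∘ q ∈ I) ∧
    ∀ J : Set (X → X), J.Nonempty → IsClosed J → J ⊆ I →
      (∀ p ∈ envCascade f, ∀ q ∈ J, p ∘ q ∈ J) → J = I

/-!
The `ℤ`-orbit `{f^m ∘ p : m ∈ ℤ}` of any `p ∈ E(X)` lies in `E(X)`, and every left ideal
containing one of its points contains all of it, because `f^m ∈ E(X)` for all `m ∈ ℤ` and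
`f^m ∘ f^j = f^(m+j)`. Since `q ↦ q ∘ g` is continuous, a closed set containing the `ℤ`-orbit
of `g` contains `q ∘ g` for every `q` in the closure `E(X)` of `{f^m}`. So as soon as the
`ℤ`-orbit of `p` is closed it is a minimal left ideal. When `f^n ∘ p = p` with `n ≥ 1`, the
`ℤ`-orbit is the finite set `{f^k ∘ p : k < n}`, which is closed.
-/

theorem Equiv.Perm.zpow_apply_eq_zpow_emod_apply {α : Type*} {σ : Equiv.Perm α} {a : α}
    {n : ℕ} (h : (σ ^ n) a = a) (m : ℤ) : (σ ^ m) a = (σ ^ (m % n)) a := by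
  conv_lhs => rw [← Int.emod_add_mul_ediv m n, zpow_add, Equiv.Perm.mul_apply, zpow_mul,
    zpow_natCast, Equiv.Perm.zpow_apply_eq_self_of_apply_eq_self h]

namespace envCascade

variable {X : Type*} [TopologicalSpace X] (f : X ≃ₜ X)

def zpowOrbit (p : X → X) : Set (X → X) :=
  Set.range fun m : ℤ => ⇑(f.toEquiv ^ m) ∘ p

theorem coe_zpow_natCast (k : ℕ) : ⇑(f.toEquiv ^ (k : ℤ)) = (⇑f)^[k] := by
  rw [zpow_natCast, Equiv.Perm.coe_pow]
  rfl

theorem coe_zpow_comp_coe_zpow (m j : ℤ) :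
    ⇑(f.toEquiv ^ m) ∘ ⇑(f.toEquiv ^ j) = ⇑(f.toEquiv ^ (m + j)) := by
  rw [zpow_add, Equiv.Perm.coe_mul]

theorem continuous_coe_zpow (m : ℤ) : Continuous ⇑(f.toEquiv ^ m) := by
  induction m using Int.induction_on with
  | zero => exact continuous_id
  | succ m ih =>
    rw [zpow_add_one, Equiv.Perm.coe_mul]
    exact ih.comp f.continuous
  | pred m ih =>
    rw [zpow_sub_one, Equiv.Perm.coe_mul]
    exact ih.comp f.symm.continuous

theorem coe_zpow_mem (m : ℤ) : ⇑(f.toEquiv ^ m) ∈ envCascade f :=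
  subset_closure ⟨m, rfl⟩

theorem zpow_comp_mem_zpowOrbit (p : X → X) (m : ℤ) {g : X → X} (hg : g ∈ zpowOrbit f p) :
    ⇑(f.toEquiv ^ m) ∘ g ∈ zpowOrbit f p := by
  obtain ⟨j, rfl⟩ := hg
  exact ⟨m + j, by rw [← Function.comp_assoc, coe_zpow_comp_coe_zpow]⟩

theorem zpowOrbit_subset_envCascade {p : X → X} (hp : p ∈ envCascade f) :
    zpowOrbit f p ⊆ envCascade f := by
  rintro _ ⟨m, rfl⟩
  have hcont : Continuous fun g : X → X => ⇑(f.toEquiv ^ m) ∘ g :=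
    continuous_pi fun x => (continuous_coe_zpow f m).comp (continuous_apply x)
  refine map_mem_closure hcont hp ?_
  rintro _ ⟨j, rfl⟩
  exact ⟨m + j, (coe_zpow_comp_coe_zpow f m j).symm⟩

theorem comp_mem_of_forall_zpow_comp_mem {S : Set (X → X)} (hS : IsClosed S) {g : X → X}
    (hg : ∀ m : ℤ, ⇑(f.toEquiv ^ m) ∘ g ∈ S) {q : X → X} (hq : q ∈ envCascade f) :
    q ∘ g ∈ S := by
  have hcont : Continuous fun q : X → X => q ∘ g := continuous_pi fun x => continuous_apply _
  refine closure_minimal ?_ (hS.preimage hcont) hq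
  rintro _ ⟨m, rfl⟩
  exact hg m

theorem zpowOrbit_subset_of_mem {p : X → X} {J : Set (X → X)}
    (hJ : ∀ q ∈ envCascade f, ∀ g ∈ J, q ∘ g ∈ J) {g : X → X} (hgJ : g ∈ J)
    (hg : g ∈ zpowOrbit f p) : zpowOrbit f p ⊆ J := by
  obtain ⟨j, rfl⟩ := hg
  rintro _ ⟨m, rfl⟩
  have h := hJ _ (coe_zpow_mem f (m - j)) _ hgJ
  rwa [← Function.comp_assoc, coe_zpow_comp_coe_zpow, sub_add_cancel] at h

theorem isMinLeftIdealCascade_zpowOrbit {p : X → X} (hp : p ∈ envCascade f)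
    (hclosed : IsClosed (zpowOrbit f p)) : IsMinLeftIdealCascade f (zpowOrbit f p) := by
  refine ⟨⟨_, 0, rfl⟩, hclosed, zpowOrbit_subset_envCascade f hp, ?_, ?_⟩
  · intro q hq g hg
    exact comp_mem_of_forall_zpow_comp_mem f hclosed
      (fun m => zpow_comp_mem_zpowOrbit f p m hg) hq
  · rintro J ⟨g, hgJ⟩ - hJO hJ
    exact (zpowOrbit_subset_of_mem f hJ hgJ (hJO hgJ)).antisymm' hJO

theorem zpowOrbit_eq_of_iterate_comp_eq {p : X → X} {n : ℕ} (hn : 1 ≤ n)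
    (hper : (⇑f)^[n] ∘ p = p) :
    zpowOrbit f p = {g : X → X | ∃ k < n, g = (⇑f)^[k] ∘ p} := by
  apply Set.Subset.antisymm
  · rintro _ ⟨m, rfl⟩
    have hmod : 0 ≤ m % n ∧ m % n < n :=
      ⟨Int.emod_nonneg m (by omega), Int.emod_lt_of_pos m (by omega)⟩
    refine ⟨(m % n).toNat, by omega, ?_⟩
    rw [← coe_zpow_natCast, Int.toNat_of_nonneg hmod.1]
    funext x
    exact Equiv.Perm.zpow_apply_eq_zpow_emod_apply (congrFun hper x) m
  · rintro _ ⟨k, -, rfl⟩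
    exact ⟨k, congrArg (· ∘ p) (coe_zpow_natCast f k)⟩

end envCascade

theorem orbit_of_periodic_is_minimal_left_ideal_general
    {X : Type*} [MetricSpace X] (f : X ≃ₜ X)
    (p : X → X) (hp : p ∈ envCascade f) (n : ℕ) (hn : 1 ≤ n)
    (hper : (⇑f)^[n] ∘ p = p) :
    IsMinLeftIdealCascade f {g : X → X | ∃ k < n, g = (⇑f)^[k] ∘ p} := by
  have hfinite : {g : X → X | ∃ k < n, g = (⇑f)^[k] ∘ p}.Finite :=
    ((Set.finite_Iio n).image fun k => (⇑f)^[k] ∘ p).subset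
      fun _ ⟨k, hk, hg⟩ => ⟨k, hk, hg.symm⟩
  rw [← envCascade.zpowOrbit_eq_of_iterate_comp_eq f hn hper] at hfinite ⊢
  exact envCascade.isMinLeftIdealCascade_zpowOrbit f hp hfinite.isClosed

/-- If `p ∈ E(X)` is a periodic point of `(E(X),f)` (i.e. `f^n ∘ p = p` for some `n ≥ 1`),
then its finite orbit `{p, f∘p, …, f^{n-1}∘p}` is a minimal left ideal of `E(X)`. -/
theorem orbit_of_periodic_is_minimal_left_ideal
    {X : Type*} [MetricSpace X] [CompactSpace X] (f : X ≃ₜ X)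
    (p : X → X) (hp : p ∈ envCascade f) (n : ℕ) (hn : 1 ≤ n)
    (hper : (⇑f)^[n] ∘ p = p) :
    IsMinLeftIdealCascade f {g : X → X | ∃ k < n, g = (⇑f)^[k] ∘ p} :=
  orbit_of_periodic_is_minimal_left_ideal_general f p hp n hn hper
end

section
/- Let (X,f) be a cascade. If the enveloping semigroup E(X) contains a periodic point of period n for the action p ↦ f∘p, then every periodic point of (E(X), f) has period dividing n. -/
/-- `p` is a periodic point of `(E(X),f)` of (least) period `n` for the action
`p ↦ f ∘ p`. -/
def HasPeriodCascade {X : Type*} [TopologicalSpace X] (f : X ≃ₜ X)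
    (p : X → X) (n : ℕ) : Prop :=
  0 < n ∧ (⇑f)^[n] ∘ p = p ∧ ∀ m : ℕ, 0 < m → (⇑f)^[m] ∘ p = p → n ≤ m

private lemma perm_zpow_comp_fixed {X : Type*} (g : Equiv.Perm X) (q : X → X)
    (h : ⇑g ∘ q = q) : ∀ j : ℤ, ⇑(g ^ j) ∘ q = q := by
  have hnat : ∀ k : ℕ, ⇑(g ^ k) ∘ q = q := by
    intro k
    induction k with
    | zero => simp
    | succ k ih =>
      have hgp : g ^ (k + 1) = g * g ^ k := pow_succ' g k
      rw [hgp, Equiv.Perm.coe_mul, Function.comp_assoc, ih, h]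
  intro j
  rcases j with k | k
  · simpa using hnat k
  · have h1 : ⇑(g ^ (k + 1 : ℕ)) ∘ q = q := hnat (k + 1)
    have h2 : g ^ (Int.negSucc k) = (g ^ (k + 1 : ℕ))⁻¹ := zpow_negSucc g k
    rw [h2]
    conv_lhs => rw [← h1]
    funext x
    simp

/-- If `E(X)` contains a periodic point of period `n` for the action `p ↦ f ∘ p`, then
every periodic point of `(E(X),f)` has period dividing `n`. -/
theorem period_divides_of_periodic_in_envelope
    {X : Type*} [MetricSpace X] [CompactSpace X] (f : X ≃ₜ X)
    (p : X → X) (hp : p ∈ envCascade f) (n : ℕ) (hpn : HasPeriodCascade f p n) :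
    ∀ q ∈ envCascade f, ∀ m : ℕ, HasPeriodCascade f q m → m ∣ n := by
  intro q hq m hqm
  obtain ⟨hm, hqfix, hmin⟩ := hqm
  obtain ⟨hn0, hpfix, -⟩ := hpn
  have hmz : (0 : ℤ) < (m : ℤ) := by exact_mod_cast hm
  -- the base periodicity, phrased with integer powers of the permutation
  have hbase : ⇑(f.toEquiv ^ (m : ℤ)) ∘ q = q := by
    rw [zpow_natCast, Equiv.Perm.coe_pow]
    exact hqfix
  -- the finite orbit of q
  set Orb : Set (X → X) := (fun j : ℕ => (⇑f)^[j] ∘ q) '' Set.Iio m with hOrbdef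
  have horb : ∀ k : ℤ, ⇑(f.toEquiv ^ k) ∘ q ∈ Orb := by
    intro k
    have hdvd : (m : ℤ) ∣ (m : ℤ) * (k / m) := Dvd.intro _ rfl
    have hfix : ⇑(f.toEquiv ^ ((m : ℤ) * (k / (m : ℤ)))) ∘ q = q := by
      have := perm_zpow_comp_fixed (f.toEquiv ^ (m : ℤ)) q hbase (k / (m : ℤ))
      rwa [← zpow_mul] at this
    have hsplit : f.toEquiv ^ k
        = f.toEquiv ^ (k % (m : ℤ)) * f.toEquiv ^ ((m : ℤ) * (k / (m : ℤ))) := by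
      rw [← zpow_add]
      congr 1
      exact (Int.emod_add_mul_ediv k (m : ℤ)).symm
    have hmod_nonneg : 0 ≤ k % (m : ℤ) := Int.emod_nonneg k (by omega)
    have hmod_lt : k % (m : ℤ) < (m : ℤ) := Int.emod_lt_of_pos k hmz
    have hcast : f.toEquiv ^ (k % (m : ℤ)) = f.toEquiv ^ ((k % (m : ℤ)).toNat) := by
      rw [← zpow_natCast, Int.toNat_of_nonneg hmod_nonneg]
    have : ⇑(f.toEquiv ^ k) ∘ q = (⇑f)^[(k % (m : ℤ)).toNat] ∘ q := by
      rw [hsplit, Equiv.Perm.coe_mul, Function.comp_assoc, hfix, hcast,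
        Equiv.Perm.coe_pow]
      rfl
    rw [this]
    exact ⟨(k % (m : ℤ)).toNat, Set.mem_Iio.mpr (by omega), rfl⟩
  -- Orb is closed (finite set in a T1 space)
  have hOrbclosed : IsClosed Orb :=
    ((Set.finite_Iio m).image _).isClosed
  -- p ∘ q lies in Orb
  have hcont : Continuous fun t : X → X => t ∘ q :=
    continuous_pi fun x => continuous_apply (q x)
  have hmemclo : p ∘ q ∈ closure Orb := by
    refine map_mem_closure (f := fun t : X → X => t ∘ q) hcont hp ?_
    rintro t ⟨k, rfl⟩
    simpa using horb k
  rw [hOrbclosed.closure_eq] at hmemclo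
  obtain ⟨i, -, hiq⟩ := hmemclo
  -- deduce f^[n] ∘ q = q
  have key : (⇑f)^[n] ∘ q = q := by
    have h1 : (⇑f)^[n] ∘ (p ∘ q) = p ∘ q := by
      rw [← Function.comp_assoc, hpfix]
    rw [← hiq] at h1
    funext x
    have h2 := congrFun h1 x
    simp only [Function.comp_apply] at h2 ⊢
    have hcomm : (⇑f)^[n] ((⇑f)^[i] (q x)) = (⇑f)^[i] ((⇑f)^[n] (q x)) := by
      rw [← Function.iterate_add_apply, ← Function.iterate_add_apply, Nat.add_comm]
    rw [hcomm] at h2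
    exact (f.injective.iterate i) h2
  -- minimality forces divisibility
  have hmul : ∀ s : ℕ, (⇑f)^[m * s] ∘ q = q := by
    intro s
    induction s with
    | zero => simp
    | succ s ih =>
      rw [Nat.mul_succ, Function.iterate_add, Function.comp_assoc, hqfix, ih]
  have hdecomp : (⇑f)^[n % m] ∘ q = q := by
    have h3 : (⇑f)^[n % m + m * (n / m)] ∘ q = q := by
      rw [Nat.mod_add_div]
      exact key
    rwa [Function.iterate_add, Function.comp_assoc, hmul] at h3
  rcases Nat.eq_zero_or_pos (n % m) with h0 | hpos
  · exact Nat.dvd_of_mod_eq_zero h0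
  · exact absurd (hmin _ hpos hdecomp) (Nat.not_le.mpr (Nat.mod_lt _ hm))
end

section
/- Let (X,T) be a point transitive flow such that the proximal relation P(X) is an equivalence relation. Then the proximal relation P(E(X)) on the flow (E(X),T) is also an equivalence relation. -/
/-- The enveloping semigroup of the flow `(X,T)`. -/
def envSemigroup (T X : Type*) [Group T] [TopologicalSpace X] [MulAction T X] :
    Set (X → X) :=
  closure (Set.range fun t : T => fun x : X => t • x)

/-- Proximality for a `T`-action `act` on a space `Y`: the orbit closure of the pair
meets the diagonal (equivalently, some net `t_i` with `lim t_i y₁ = lim t_i y₂`). -/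
def ProximalPair (T : Type*) {Y : Type*} [Group T] [TopologicalSpace Y]
    (act : T → Y → Y) (y₁ y₂ : Y) : Prop :=
  ∃ z ∈ closure {w : Y × Y | ∃ t : T, w = (act t y₁, act t y₂)}, z.1 = z.2

/-!
Proximality in `X` and in `E(X)` are both witnessed inside `E(X)`: `(x, y)` is proximal iff
`s x = s y` for some `s ∈ E(X)`, and `(p, q)` is proximal iff `s ∘ p = s ∘ q`. So the witnesses
of `(p, q)` form a closed left ideal `D(p, q)`. Given `(p, q)` and `(q, r)` proximal, pick an
idempotent `u` in a minimal left ideal `L ⊆ D(p, q)` and an idempotent `v ∈ D(q, r)`.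
Transitivity of `P(X)` forces `u ∘ v = u`: for each `x`, the chain `u x ~ x ~ v x ~ u (v x)` shows
that the left ideal of those `a ∈ L` with `a (u x) = a (v x)` is nonempty, hence all of `L`. Then
`u ∘ p = u ∘ q = u ∘ v ∘ q = u ∘ v ∘ r = u ∘ r`.
-/

open Set Function

section EnvelopingSemigroup

variable {T X : Type*} [Group T] [TopologicalSpace X] [MulAction T X]

theorem smul_mem_envSemigroup (t : T) : (fun x : X => t • x) ∈ envSemigroup T X :=
  subset_closure ⟨t, rfl⟩

theorem isClosed_envSemigroup : IsClosed (envSemigroup T X) := isClosed_closure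

theorem comp_mem_envSemigroup (hc : ∀ t : T, Continuous fun x : X => t • x)
    {p q : X → X} (hp : p ∈ envSemigroup T X) (hq : q ∈ envSemigroup T X) :
    p ∘ q ∈ envSemigroup T X := by
  have smul_comp_mem (t : T) : (fun x : X => t • x) ∘ q ∈ envSemigroup T X := by
    refine map_mem_closure (Pi.continuous_postcomp (hc t)) hq ?_
    rintro _ ⟨t', rfl⟩
    exact ⟨t * t', funext fun x => mul_smul t t' x⟩
  have := map_mem_closure (Pi.continuous_precomp q) hp
    (by rintro _ ⟨t, rfl⟩; exact smul_comp_mem t)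
  rwa [isClosed_envSemigroup.closure_eq] at this

theorem proximalPair_iff_exists_envSemigroup [CompactSpace X] {Y : Type*} [TopologicalSpace Y]
    [T2Space Y] (ev : (X → X) → Y → Y) (hev : ∀ y, Continuous fun g => ev g y) (y₁ y₂ : Y) :
    ProximalPair T (fun t => ev fun x => t • x) y₁ y₂ ↔
      ∃ s ∈ envSemigroup T X, ev s y₁ = ev s y₂ := by
  set F : (X → X) → Y × Y := fun g => (ev g y₁, ev g y₂)
  have hF : Continuous F := (hev y₁).prodMk (hev y₂)
  have horbit : {w : Y × Y | ∃ t : T, w = (ev (fun x => t • x) y₁, ev (fun x => t • x) y₂)} =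
      F '' range fun t : T => fun x : X => t • x := by
    ext
    simp [F, eq_comm]
  rw [ProximalPair, horbit, hF.isClosedMap.closure_image_eq_of_continuous hF, exists_mem_image]
  rfl

theorem proximalPair_iff [CompactSpace X] [T2Space X] (x y : X) :
    ProximalPair T (fun t (x : X) => t • x) x y ↔ ∃ s ∈ envSemigroup T X, s x = s y :=
  proximalPair_iff_exists_envSemigroup (fun g y => g y) continuous_apply x y

theorem proximalPair_comp_iff [CompactSpace X] [T2Space X] (p q : X → X) :
    ProximalPair T (fun t (g : X → X) => (fun x : X => t • x) ∘ g) p q ↔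
      ∃ s ∈ envSemigroup T X, s ∘ p = s ∘ q :=
  proximalPair_iff_exists_envSemigroup (fun s g => s ∘ g) Pi.continuous_precomp p q

theorem proximalPair_apply_self_of_idempotent [CompactSpace X] [T2Space X] {u : X → X}
    (hu : u ∈ envSemigroup T X) (huu : u ∘ u = u) (x : X) :
    ProximalPair T (fun t (x : X) => t • x) (u x) x :=
  (proximalPair_iff _ _).2 ⟨u, hu, congrFun huu x⟩

end EnvelopingSemigroup

structure IsClosedLeftIdeal (T : Type*) {X : Type*} [Group T] [TopologicalSpace X]
    [MulAction T X] (L : Set (X → X)) : Prop where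
  nonempty : L.Nonempty
  isClosed : IsClosed L
  subset_envSemigroup : L ⊆ envSemigroup T X
  comp_mem : ∀ s ∈ envSemigroup T X, ∀ a ∈ L, s ∘ a ∈ L

section LeftIdeal

variable {T X : Type*} [Group T] [TopologicalSpace X] [MulAction T X]

theorem isClosedLeftIdeal_envSemigroup (hc : ∀ t : T, Continuous fun x : X => t • x) :
    IsClosedLeftIdeal T (envSemigroup T X) :=
  ⟨⟨_, smul_mem_envSemigroup (1 : T)⟩, isClosed_envSemigroup, subset_rfl,
    fun _ hs _ ha => comp_mem_envSemigroup hc hs ha⟩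

theorem IsClosedLeftIdeal.sep {L : Set (X → X)} (hL : IsClosedLeftIdeal T L)
    {C : (X → X) → Prop} (hC : IsClosed {a | C a})
    (hcomp : ∀ s ∈ envSemigroup T X, ∀ a, C a → C (s ∘ a)) (hne : ∃ a ∈ L, C a) :
    IsClosedLeftIdeal T {a ∈ L | C a} :=
  ⟨hne, hL.isClosed.inter hC, fun _ ha => hL.subset_envSemigroup ha.1,
    fun s hs a ha => ⟨hL.comp_mem s hs a ha.1, hcomp s hs a ha.2⟩⟩

theorem IsClosedLeftIdeal.exists_minimal_subset [CompactSpace X] {D : Set (X → X)}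
    (hD : IsClosedLeftIdeal T D) : ∃ L ⊆ D, Minimal (IsClosedLeftIdeal T) L := by
  have chain_bound : ∀ c ⊆ {L : Set (X → X) | IsClosedLeftIdeal T L}, IsChain (· ⊆ ·) c →
      c.Nonempty → ∃ lb ∈ {L | IsClosedLeftIdeal T L}, ∀ L ∈ c, lb ⊆ L := by
    rintro c hc hchain ⟨L₀, hL₀⟩
    have : Nonempty c := ⟨⟨L₀, hL₀⟩⟩
    refine ⟨⋂₀ c, ⟨?_, isClosed_sInter fun L hL => (hc hL).isClosed,
      (sInter_subset_of_mem hL₀).trans (hc hL₀).subset_envSemigroup, ?_⟩,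
      fun L hL => sInter_subset_of_mem hL⟩
    · exact IsCompact.nonempty_sInter_of_directed_nonempty_isCompact_isClosed
        (IsChain.directedOn hchain.symm) (fun L hL => (hc hL).nonempty)
        (fun L hL => (hc hL).isClosed.isCompact) (fun L hL => (hc hL).isClosed)
    · exact fun s hs a ha => mem_sInter.2 fun L hL => (hc hL).comp_mem s hs a (ha L hL)
  exact zorn_superset_nonempty _ chain_bound D hD

theorem IsClosedLeftIdeal.exists_idempotent [CompactSpace X] [T2Space X] {L : Set (X → X)}
    (hL : IsClosedLeftIdeal T L) : ∃ u ∈ L, u ∘ u = u := by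
  let : Semigroup (X → X) := { mul := (· ∘ ·), mul_assoc := fun _ _ _ => rfl }
  exact exists_idempotent_in_compact_subsemigroup Pi.continuous_precomp L hL.nonempty
    hL.isClosed.isCompact fun a _ b hb => hL.comp_mem a (hL.subset_envSemigroup ‹_›) b hb

theorem Minimal.comp_idempotent_eq [CompactSpace X] [T2Space X]
    (hEq : Equivalence (ProximalPair T fun t (x : X) => t • x)) {L : Set (X → X)}
    (hL : Minimal (IsClosedLeftIdeal T) L) {u v : X → X} (hu : u ∈ L) (huu : u ∘ u = u)
    (hv : v ∈ envSemigroup T X) (hvv : v ∘ v = v) : u ∘ v = u := by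
  have huE := hL.prop.subset_envSemigroup hu
  funext x
  have hux : u (u x) = u x := congrFun huu x
  have hprox : ProximalPair T (fun t (x : X) => t • x) (u x) (u (v x)) :=
    hEq.trans (proximalPair_apply_self_of_idempotent huE huu x) <|
      hEq.trans (hEq.symm (proximalPair_apply_self_of_idempotent hv hvv x))
        (hEq.symm (proximalPair_apply_self_of_idempotent huE huu (v x)))
  obtain ⟨s, hs, hsx⟩ := (proximalPair_iff _ _).1 hprox
  have hA : IsClosedLeftIdeal T {a ∈ L | a (u x) = a (v x)} :=
    hL.prop.sep (isClosed_eq (continuous_apply _) (continuous_apply _))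
      (fun s _ _ ha => congrArg s ha)
      ⟨s ∘ u, hL.prop.comp_mem s hs u hu, show s (u (u x)) = s (u (v x)) by rw [hux]; exact hsx⟩
  have huA : u ∈ {a ∈ L | a (u x) = a (v x)} := (hL.eq_of_subset hA (sep_subset _ _)).symm ▸ hu
  exact huA.2.symm.trans hux

end LeftIdeal

theorem proximalPair_comp_trans {T X : Type*} [Group T] [TopologicalSpace X] [CompactSpace X]
    [T2Space X] [MulAction T X] (hc : ∀ t : T, Continuous fun x : X => t • x)
    (hEq : Equivalence (ProximalPair T fun t (x : X) => t • x)) {p q r : X → X}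
    (hpq : ProximalPair T (fun t (g : X → X) => (fun x : X => t • x) ∘ g) p q)
    (hqr : ProximalPair T (fun t (g : X → X) => (fun x : X => t • x) ∘ g) q r) :
    ProximalPair T (fun t (g : X → X) => (fun x : X => t • x) ∘ g) p r := by
  have witnesses (p q : X → X) (h : ∃ s ∈ envSemigroup T X, s ∘ p = s ∘ q) :
      IsClosedLeftIdeal T {a ∈ envSemigroup T X | a ∘ p = a ∘ q} :=
    (isClosedLeftIdeal_envSemigroup hc).sep
      (isClosed_eq (Pi.continuous_precomp p) (Pi.continuous_precomp q))
      (fun s _ _ ha => congrArg (s ∘ ·) ha) h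
  obtain ⟨L, hLD, hL⟩ := (witnesses p q ((proximalPair_comp_iff p q).1 hpq)).exists_minimal_subset
  obtain ⟨u, huL, huu⟩ := hL.prop.exists_idempotent
  obtain ⟨v, hvD, hvv⟩ := (witnesses q r ((proximalPair_comp_iff q r).1 hqr)).exists_idempotent
  have huv : u ∘ v = u := hL.comp_idempotent_eq hEq huL huu hvD.1 hvv
  refine (proximalPair_comp_iff p r).2 ⟨u, hL.prop.subset_envSemigroup huL, ?_⟩
  calc u ∘ p = u ∘ q := (hLD huL).2
    _ = u ∘ (v ∘ q) := (congrArg (· ∘ q) huv).symm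
    _ = u ∘ (v ∘ r) := by rw [hvD.2]
    _ = u ∘ r := congrArg (· ∘ r) huv

theorem proximal_equivalence_on_envelope_general
    {T X : Type*} [Group T] [TopologicalSpace X] [CompactSpace X] [T2Space X] [MulAction T X]
    (hc : ∀ t : T, Continuous fun x : X => t • x)
    (hEq : Equivalence (ProximalPair T fun t (x : X) => t • x)) :
    (∀ p ∈ envSemigroup T X,
        ProximalPair T (fun t (g : X → X) => (fun x : X => t • x) ∘ g) p p) ∧
    (∀ p ∈ envSemigroup T X, ∀ q ∈ envSemigroup T X,
        ProximalPair T (fun t (g : X → X) => (fun x : X => t • x) ∘ g) p q →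
        ProximalPair T (fun t (g : X → X) => (fun x : X => t • x) ∘ g) q p) ∧
    (∀ p ∈ envSemigroup T X, ∀ q ∈ envSemigroup T X, ∀ r ∈ envSemigroup T X,
        ProximalPair T (fun t (g : X → X) => (fun x : X => t • x) ∘ g) p q →
        ProximalPair T (fun t (g : X → X) => (fun x : X => t • x) ∘ g) q r →
        ProximalPair T (fun t (g : X → X) => (fun x : X => t • x) ∘ g) p r) := by
  refine ⟨fun p _ => ?_, fun p _ q _ hpq => ?_, fun p _ q _ r _ => proximalPair_comp_trans hc hEq⟩
  · exact (proximalPair_comp_iff p p).2 ⟨_, smul_mem_envSemigroup (1 : T), rfl⟩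
  · obtain ⟨s, hs, hspq⟩ := (proximalPair_comp_iff p q).1 hpq
    exact (proximalPair_comp_iff q p).2 ⟨s, hs, hspq.symm⟩

/-- If `(X,T)` is a point transitive flow whose proximal relation is an equivalence
relation, then the proximal relation of the flow `(E(X),T)` is also an equivalence
relation (on `E(X)`). -/
theorem proximal_equivalence_on_envelope
    {T X : Type*} [Group T] [TopologicalSpace X] [CompactSpace X] [T2Space X] [MulAction T X]
    (hc : ∀ t : T, Continuous fun x : X => t • x)
    (htrans : ∃ x₀ : X, Dense (Set.range fun t : T => t • x₀))
    (hEq : Equivalence (ProximalPair T fun t (x : X) => t • x)) :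
    (∀ p ∈ envSemigroup T X,
        ProximalPair T (fun t (g : X → X) => (fun x : X => t • x) ∘ g) p p) ∧
    (∀ p ∈ envSemigroup T X, ∀ q ∈ envSemigroup T X,
        ProximalPair T (fun t (g : X → X) => (fun x : X => t • x) ∘ g) p q →
        ProximalPair T (fun t (g : X → X) => (fun x : X => t • x) ∘ g) q p) ∧
    (∀ p ∈ envSemigroup T X, ∀ q ∈ envSemigroup T X, ∀ r ∈ envSemigroup T X,
        ProximalPair T (fun t (g : X → X) => (fun x : X => t • x) ∘ g) p q →
        ProximalPair T (fun t (g : X → X) => (fun x : X => t • x) ∘ g) q r →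
        ProximalPair T (fun t (g : X → X) => (fun x : X => t • x) ∘ g) p r) :=
  proximal_equivalence_on_envelope_general hc hEq
end

section
/- For a flow (X,T) on a compact metric space, the map Θ : E(2^X) → E(X) defined by Θ(α) = α′ where {α′(x)} = α({x}) for all x ∈ X, is a well-defined continuous homomorphism of flows (Θ(t∘α) = t∘Θ(α) for all t ∈ T). -/
open TopologicalSpace

/-- The induced action of `t ∈ T` on the hyperspace `2^X` of nonempty closed
(= compact) subsets of the compact metric space `X`: `t • A = {t • a : a ∈ A}`. -/
def hyperAct {T X : Type*} [Group T] [MetricSpace X] [MulAction T X]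
    (hc : ∀ t : T, Continuous fun x : X => t • x) (t : T)
    (A : NonemptyCompacts X) : NonemptyCompacts X :=
  ⟨⟨(fun x : X => t • x) '' (A : Set X), A.isCompact.image (hc t)⟩,
    A.nonempty.image _⟩

/-- The enveloping semigroup `E(2^X)` of the induced flow: the closure of the induced
maps in `(2^X)^{2^X}` with the product topology. -/
def envHyper {T X : Type*} [Group T] [MetricSpace X] [MulAction T X]
    (hc : ∀ t : T, Continuous fun x : X => t • x) :
    Set (NonemptyCompacts X → NonemptyCompacts X) :=
  closure (Set.range (hyperAct hc))

/-- The singleton `{x}` as an element of the hyperspace. -/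
def singNC {X : Type*} [MetricSpace X] (x : X) : NonemptyCompacts X :=
  ⟨⟨{x}, isCompact_singleton⟩, Set.singleton_nonempty x⟩

/-! The map `x ↦ {x}` is an isometric embedding of `X` onto a closed subset of `2^X`.
Each induced map sends singletons to singletons, and this is a closed condition in the
product topology, so every `α ∈ E(2^X)` does too; reading `α′` off through the embedding is
then continuous in `α`. Continuity carries `Θ(t) = t` from the induced maps to the closure
`E(2^X)`, landing in `E(X)`, and `Θ(t ∘ α) = t ∘ Θ(α)` holds since `t({y}) = {t y}`. -/

open Set

section Singletons

variable {X : Type*} [MetricSpace X]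

theorem isometry_singNC : Isometry (singNC (X := X)) := by
  intro x y
  change Metric.hausdorffEDist ({x} : Set X) {y} = edist x y
  simp [Metric.hausdorffEDist_def, Metric.infEDist_singleton, edist_comm]

theorem isClosed_range_singNC [CompleteSpace X] : IsClosed (range (singNC (X := X))) :=
  isometry_singNC.isClosedEmbedding.isClosed_range

/-- The map `α′` with `α({x}) = {α′(x)}`; a junk value wherever `α({x})` is not a singleton. -/
noncomputable def singletonPart (α : NonemptyCompacts X → NonemptyCompacts X) (x : X) : X :=
  haveI : Nonempty X := ⟨x⟩
  Function.invFun singNC (α (singNC x))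

theorem singNC_singletonPart {α : NonemptyCompacts X → NonemptyCompacts X} {x : X}
    (h : α (singNC x) ∈ range singNC) : singNC (singletonPart α x) = α (singNC x) :=
  haveI : Nonempty X := ⟨x⟩
  Function.invFun_eq h

theorem continuousOn_singletonPart {S : Set (NonemptyCompacts X → NonemptyCompacts X)}
    (hS : ∀ α ∈ S, ∀ x, α (singNC x) ∈ range singNC) : ContinuousOn singletonPart S := by
  refine continuousOn_pi.2 fun x => ?_
  rw [isometry_singNC.isEmbedding.continuousOn_iff]
  exact (continuous_apply _).continuousOn.congr fun α hα => singNC_singletonPart (hS α hα x)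

end Singletons

section Hyperspace

variable {T X : Type*} [Group T] [MetricSpace X] [MulAction T X]
  (hc : ∀ t : T, Continuous fun x : X => t • x)

theorem hyperAct_singNC (t : T) (x : X) : hyperAct hc t (singNC x) = singNC (t • x) :=
  NonemptyCompacts.ext (image_singleton (f := fun x : X => t • x))

theorem singletonPart_hyperAct (t : T) : singletonPart (hyperAct hc t) = fun x : X => t • x :=
  funext fun x => isometry_singNC.injective <| by
    rw [singNC_singletonPart ⟨t • x, (hyperAct_singNC hc t x).symm⟩, hyperAct_singNC]

theorem singletonPart_comp_hyperAct {α : NonemptyCompacts X → NonemptyCompacts X}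
    (hα : ∀ x, α (singNC x) ∈ range singNC) (t : T) :
    singletonPart (hyperAct hc t ∘ α) = (fun x : X => t • x) ∘ singletonPart α := by
  funext x
  have htα : (hyperAct hc t ∘ α) (singNC x) ∈ range singNC :=
    ⟨t • singletonPart α x, by
      rw [Function.comp_apply, ← singNC_singletonPart (hα x), hyperAct_singNC]⟩
  apply isometry_singNC.injective
  rw [singNC_singletonPart htα, Function.comp_apply, ← singNC_singletonPart (hα x),
    hyperAct_singNC, Function.comp_apply]

theorem mem_range_singNC_of_mem_envHyper [CompleteSpace X]
    {α : NonemptyCompacts X → NonemptyCompacts X} (hα : α ∈ envHyper hc) (x : X) :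
    α (singNC x) ∈ range singNC := by
  have hclosed : IsClosed {β : NonemptyCompacts X → NonemptyCompacts X |
      β (singNC x) ∈ range singNC} :=
    isClosed_range_singNC.preimage (continuous_apply (singNC x))
  refine closure_minimal ?_ hclosed hα
  rintro _ ⟨t, rfl⟩
  exact ⟨t • x, (hyperAct_singNC hc t x).symm⟩

theorem continuousOn_singletonPart_envHyper [CompleteSpace X] :
    ContinuousOn singletonPart (envHyper hc) :=
  continuousOn_singletonPart fun _ hα => mem_range_singNC_of_mem_envHyper hc hα

theorem singletonPart_mem_closure_range_smul [CompleteSpace X]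
    {α : NonemptyCompacts X → NonemptyCompacts X} (hα : α ∈ envHyper hc) :
    singletonPart α ∈ closure (range fun t : T => fun x : X => t • x) := by
  refine closure_mono ?_
    ((continuousOn_singletonPart_envHyper hc).image_closure (mem_image_of_mem _ hα))
  rintro _ ⟨_, ⟨t, rfl⟩, rfl⟩
  exact ⟨t, (singletonPart_hyperAct hc t).symm⟩

end Hyperspace

/-- The map `Θ : E(2^X) → E(X)`, `Θ(α) = α′` where `{α′(x)} = α({x})`, is a well-defined
continuous homomorphism of flows. -/
theorem exists_theta_flow_homomorphism
    {T X : Type*} [Group T] [MetricSpace X] [CompactSpace X] [MulAction T X]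
    (hc : ∀ t : T, Continuous fun x : X => t • x) :
    ∃ Θ : ↥(envHyper hc) → (X → X),
      Continuous Θ ∧
      ∀ α : ↥(envHyper hc),
        Θ α ∈ closure (Set.range fun t : T => fun x : X => t • x) ∧
        (∀ x : X, ((α : NonemptyCompacts X → NonemptyCompacts X) (singNC x) : Set X)
          = {Θ α x}) ∧
        ∀ t : T,
          ∀ h : hyperAct hc t ∘ (α : NonemptyCompacts X → NonemptyCompacts X) ∈ envHyper hc,
            Θ ⟨_, h⟩ = (fun x : X => t • x) ∘ Θ α := by
  have hsing := fun (α : ↥(envHyper hc)) => mem_range_singNC_of_mem_envHyper hc α.2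
  refine ⟨fun α => singletonPart α.1, ?_, fun α => ⟨?_, fun x => ?_, fun t _ => ?_⟩⟩
  · exact continuousOn_iff_continuous_domRestrict.1 (continuousOn_singletonPart_envHyper hc)
  · exact singletonPart_mem_closure_range_smul hc α.2
  · rw [← singNC_singletonPart (hsing α x)]
    rfl
  · exact singletonPart_comp_hyperAct hc (hsing α) t
end

section
/- If (X,T) is an equicontinuous flow on a compact metric space, then the map Θ : E(2^X) → E(X) given by Θ(α)({x}) = α({x}) is an isomorphism of flows; in particular E(X) and E(2^X) are conjugate. -/
open TopologicalSpace

/-!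
For an equicontinuous flow every `f ∈ E(X)` is continuous, and on the equicontinuous set `E(X)`
pointwise convergence is uniform convergence. Hence `f ↦ f_*`, `f_* A = f A`, is continuous from
`E(X)` to `(2^X)^{2^X}`; since `E(X)` is compact and `f_*` extends the generators `t ↦ t_*`, the
image of `E(X)` is exactly `E(2^X)`. Restricting to singletons inverts `f ↦ f_*`, which gives `Θ`.
-/

open Metric Set Filter Topology
open scoped UniformConvergence

lemma hausdorffDist_image_le_of_dist_le {X Y : Type*} [PseudoMetricSpace Y] {f g : X → Y}
    {s : Set X} {r : ℝ} (hr : 0 ≤ r) (h : ∀ x ∈ s, dist (f x) (g x) ≤ r) : hausdorffDist (f '' s) (g '' s) ≤ r := by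
  apply hausdorffDist_le_of_mem_dist hr
  · rintro _ ⟨x, hx, rfl⟩
    exact ⟨g x, mem_image_of_mem g hx, h x hx⟩
  · rintro _ ⟨x, hx, rfl⟩
    exact ⟨f x, mem_image_of_mem f hx, dist_comm (g x) (f x) ▸ h x hx⟩

section ClosureImage

variable {X Y : Type*} [TopologicalSpace X] [MetricSpace Y] [CompactSpace Y]

/-- `A ↦ f A`, closed up so that it is defined for every `f`, not only continuous ones. -/
def closureImage (f : X → Y) (A : NonemptyCompacts X) : NonemptyCompacts Y :=
  ⟨⟨closure (f '' A), isClosed_closure.isCompact⟩, (A.nonempty.image f).closure⟩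

lemma continuous_closureImage_uniformFun (A : NonemptyCompacts X) :
    Continuous fun f : X →ᵤ Y => closureImage (UniformFun.toFun f) A := by
  refine continuous_iff_continuousAt.2 fun f => Metric.tendsto_nhds.2 fun ε hε => ?_
  have hunif := UniformFun.tendsto_iff_tendstoUniformly.1 (tendsto_id (x := 𝓝 f))
  filter_upwards [Metric.tendstoUniformly_iff.1 hunif (ε / 2) (half_pos hε)] with g hg
  calc dist (closureImage (UniformFun.toFun g) A) (closureImage (UniformFun.toFun f) A)
      = hausdorffDist (UniformFun.toFun g '' A) (UniformFun.toFun f '' A) :=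
        hausdorffDist_closure
    _ ≤ ε / 2 := hausdorffDist_image_le_of_dist_le (half_pos hε).le
        fun x _ => by rw [dist_comm]; exact (hg x).le
    _ < ε := half_lt_self hε

/-- On an equicontinuous family pointwise convergence is uniform convergence (Ascoli), and
`f ↦ cl (f A)` is `1`-Lipschitz for the uniform distance. -/
lemma continuousOn_closureImage [CompactSpace X] {S : Set (X → Y)} (hS : S.Equicontinuous) :
    ContinuousOn (closureImage (X := X)) S := by
  refine continuousOn_pi.2 fun A => continuousOn_iff_continuous_domRestrict.2 ?_
  have hind : IsInducing (UniformFun.ofFun ∘ ((↑) : S → X → Y)) :=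
    (hS.inducing_uniformFun_iff_pi).2 IsInducing.subtypeVal
  exact (continuous_closureImage_uniformFun A).comp hind.continuous

end ClosureImage

/-- The enveloping semigroup `E(X)`. -/
def envelopingSemigroup (T X : Type*) [SMul T X] [TopologicalSpace X] : Set (X → X) :=
  closure (range fun t : T => fun x : X => t • x)

lemma equicontinuous_envelopingSemigroup {T X : Type*} [SMul T X] [MetricSpace X]
    (heq : ∀ ε > (0 : ℝ), ∃ δ > (0 : ℝ), ∀ x y : X, dist x y < δ →
      ∀ t : T, dist (t • x) (t • y) < ε) :
    (envelopingSemigroup T X).Equicontinuous :=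
  Set.Equicontinuous.closure <| equicontinuous_iff_range.1
    (Metric.uniformEquicontinuous_iff.2 heq).equicontinuous

section Theta

variable {X : Type*} [MetricSpace X]

noncomputable def thetaMap (α : NonemptyCompacts X → NonemptyCompacts X) (x : X) : X :=
  (α (singNC x)).nonempty.some

lemma thetaMap_eq_of_apply_singNC {α : NonemptyCompacts X → NonemptyCompacts X} {x y : X}
    (h : α (singNC x) = singNC y) : thetaMap α x = y := by
  have hmem : thetaMap α x ∈ (α (singNC x) : Set X) := Set.Nonempty.some_mem _
  rw [h] at hmem
  exact hmem

lemma isEmbedding_singNC : IsEmbedding (singNC (X := X)) :=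
  NonemptyCompacts.isometry_singleton.isEmbedding

lemma closureImage_singNC [CompactSpace X] (f : X → X) (x : X) :
    closureImage f (singNC x) = singNC (f x) :=
  NonemptyCompacts.ext (by simp [closureImage, singNC])

lemma thetaMap_closureImage [CompactSpace X] (f : X → X) : thetaMap (closureImage f) = f :=
  funext fun x => thetaMap_eq_of_apply_singNC (closureImage_singNC f x)

end Theta

section Flow

variable {T X : Type*} [Group T] [MetricSpace X] [CompactSpace X] [MulAction T X]
variable (hc : ∀ t : T, Continuous fun x : X => t • x)

lemma closureImage_smul (t : T) : closureImage (fun x : X => t • x) = hyperAct hc t :=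
  funext fun A => NonemptyCompacts.ext ((A.isCompact.image (hc t)).isClosed.closure_eq)

/-- `E(2^X)` is the image of `E(X)` under `f ↦ (A ↦ f A)`: the image is compact, contains the
generators `hyperAct t` and, by continuity, lies in the closure of the generators. -/
lemma envHyper_eq_image_closureImage (hE : (envelopingSemigroup T X).Equicontinuous) :
    envHyper hc = closureImage '' envelopingSemigroup T X := by
  have hcont := continuousOn_closureImage hE
  have hgen : closureImage '' range (fun t : T => fun x : X => t • x) = range (hyperAct hc) := by
    rw [← range_comp]
    exact congrArg range (funext (closureImage_smul hc))
  apply Subset.antisymm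
  · have hcpt : IsCompact (closureImage '' envelopingSemigroup T X) :=
      isClosed_closure.isCompact.image_of_continuousOn hcont
    refine closure_minimal ?_ hcpt.isClosed
    rw [← hgen]
    exact image_mono subset_closure
  · rw [envHyper, ← hgen]
    exact hcont.image_closure

lemma singNC_thetaMap (hE : (envelopingSemigroup T X).Equicontinuous)
    {α : NonemptyCompacts X → NonemptyCompacts X} (hα : α ∈ envHyper hc) (x : X) :
    α (singNC x) = singNC (thetaMap α x) := by
  obtain ⟨f, -, rfl⟩ := envHyper_eq_image_closureImage hc hE ▸ hα
  rw [thetaMap_closureImage, closureImage_singNC]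

end Flow

/-- If `(X,T)` is an equicontinuous flow on a compact metric space, then the map
`Θ : E(2^X) → E(X)` given by `{Θ(α)(x)} = α({x})` is an isomorphism of flows:
a continuous equivariant bijection of `E(2^X)` onto `E(X)`; in particular `E(X)` and
`E(2^X)` are conjugate. -/
theorem theta_isomorphism_of_equicontinuous
    {T X : Type*} [Group T] [MetricSpace X] [CompactSpace X] [MulAction T X]
    (hc : ∀ t : T, Continuous fun x : X => t • x)
    (heq : ∀ ε > (0 : ℝ), ∃ δ > (0 : ℝ), ∀ x y : X, dist x y < δ →
      ∀ t : T, dist (t • x) (t • y) < ε) :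
    ∃ Θ : (NonemptyCompacts X → NonemptyCompacts X) → (X → X),
      Set.BijOn Θ (envHyper hc)
        (closure (Set.range fun t : T => fun x : X => t • x)) ∧
      ContinuousOn Θ (envHyper hc) ∧
      (∀ α ∈ envHyper hc, ∀ x : X, (α (singNC x) : Set X) = {Θ α x}) ∧
      (∀ t : T, ∀ α ∈ envHyper hc,
        Θ (hyperAct hc t ∘ α) = (fun x : X => t • x) ∘ Θ α) := by
  have hequi := equicontinuous_envelopingSemigroup heq
  have hE := envHyper_eq_image_closureImage hc hequi
  have hinv : InvOn closureImage thetaMap (envHyper hc) (envelopingSemigroup T X) := by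
    refine ⟨?_, fun f _ => thetaMap_closureImage f⟩
    rw [hE]
    rintro _ ⟨f, -, rfl⟩
    rw [thetaMap_closureImage]
  refine ⟨thetaMap, hinv.bijOn ?_ (hE ▸ mapsTo_image _ _), ?_, ?_, ?_⟩
  · rw [hE]
    rintro _ ⟨f, hf, rfl⟩
    rwa [thetaMap_closureImage]
  · refine continuousOn_pi.2 fun x => isEmbedding_singNC.continuousOn_iff.2 ?_
    exact (continuous_apply (singNC x)).continuousOn.congr
      fun α hα => (singNC_thetaMap hc hequi hα x).symm
  · intro α hα x
    rw [singNC_thetaMap hc hequi hα x]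
    rfl
  · intro t α hα
    funext x
    apply thetaMap_eq_of_apply_singNC
    rw [Function.comp_apply, singNC_thetaMap hc hequi hα x, ← closureImage_smul hc,
      closureImage_singNC]
    rfl
end
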